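/- arXiv:2604.17973 — 2 statements merged into one kernel-verified Lean document; each statement's English description precedes it below -/
import Mathlib

section
/- Let α ∈ (0,1), T > 0, and let h : [0,T] → ℝ be C¹ with h(0) = h'(0) = 0 and [h']_{α/2;[0,T]} < ∞. Let v(t,y) = ∫₀^t P(s,y) h(t-s) ds. Then there exists a constant C = C(α, T) such that for all y ≥ 0 and all t₁, t₂ ∈ [0,T], |∂_t v(t₁, y) - ∂_t v(t₂, y)| ≤ C [h']_{α/2;[0,T]} |t₁ - t₂|^{α/2}. -/
/-!
Under the integral over `r`, `∂ₜv(t₁, y) - ∂ₜv(t₂, y)` is a difference of values of the zero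
extension `h̃'` at two points at distance `|t₁ - t₂|`, all `≤ T`. Because `h'(0) = 0`, `h̃'` is
`α/2`-Hölder on `(-∞, T]` with the constant of `h'`, so the estimate holds with
`C = ∫₀^∞ P(r,1) dr + 1`. This integral is finite: `P(r,1)` is bounded near `0` and
`O(r^{-3/2})` at infinity.
-/

open MeasureTheory Real

/-- The Poisson (boundary) kernel for the heat equation on the half-line. -/
noncomputable def heatP (s y : ℝ) : ℝ :=
  y / (2 * Real.sqrt Real.pi * s ^ ((3:ℝ)/2)) * Real.exp (-(y^2) / (4*s))

/-- The representation of the time derivative `∂ₜ v` of the solution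
`v(t,y) = ∫₀ᵗ P(s,y) h(t-s) ds`, namely
`∂ₜ v(t,y) = ∫₀^∞ P(r,1) h̃'(t - y² r) dr`, where `h̃'` is the extension of
`h'` by zero to negative times. -/
noncomputable def dtv (h' : ℝ → ℝ) (t y : ℝ) : ℝ :=
  ∫ r in Set.Ioi (0:ℝ), heatP r 1 * (if 0 ≤ t - y^2 * r then h' (t - y^2 * r) else 0)

open Set

lemma heatP_nonneg {s y : ℝ} (hs : 0 ≤ s) (hy : 0 ≤ y) : 0 ≤ heatP s y := by
  unfold heatP
  have := rpow_nonneg hs ((3:ℝ)/2)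
  positivity

lemma measurable_heatP_left (y : ℝ) : Measurable fun s => heatP s y := by
  unfold heatP
  fun_prop

lemma heatP_one_le_rpow {r : ℝ} (hr : 0 < r) :
    heatP r 1 ≤ (2 * √π)⁻¹ * r ^ (-(3:ℝ)/2) := by
  have hexp : exp (-(1 ^ 2) / (4 * r)) ≤ 1 := exp_le_one_iff.2 (by
    rw [neg_div]; exact neg_nonpos.2 (by positivity))
  have hrpow : r ^ (-(3:ℝ)/2) = (r ^ ((3:ℝ)/2))⁻¹ := by
    rw [neg_div, rpow_neg hr.le]
  calc heatP r 1 ≤ 1 / (2 * √π * r ^ ((3:ℝ)/2)) * 1 := by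
        unfold heatP
        exact mul_le_mul_of_nonneg_left hexp (by positivity)
    _ = (2 * √π)⁻¹ * r ^ (-(3:ℝ)/2) := by rw [hrpow]; field_simp

-- `exp (-1/(4r)) ≤ 32 r²` absorbs the singularity `r ^ (-3/2)` at `0`.
lemma heatP_one_le_of_le_one {r : ℝ} (hr : 0 < r) (hr1 : r ≤ 1) :
    heatP r 1 ≤ 16 / √π := by
  have hexp : exp (-(1 ^ 2) / (4 * r)) ≤ 32 * r ^ 2 := by
    have h := pow_div_factorial_le_exp (x := (4 * r)⁻¹) (by positivity) 2
    rw [show -(1 ^ 2 : ℝ) / (4 * r) = -(4 * r)⁻¹ by ring, exp_neg,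
      inv_le_comm₀ (exp_pos _) (by positivity)]
    refine le_trans ?_ h
    field_simp
    norm_num [Nat.factorial]
  have hpow : r ^ 2 ≤ r ^ ((3:ℝ)/2) := by
    rw [← rpow_natCast]
    exact rpow_le_rpow_of_exponent_ge hr hr1 (by norm_num)
  have hpos : 0 < r ^ ((3:ℝ)/2) := rpow_pos_of_pos hr _
  calc heatP r 1 ≤ 1 / (2 * √π * r ^ ((3:ℝ)/2)) * (32 * r ^ 2) := by
        unfold heatP
        exact mul_le_mul_of_nonneg_left hexp (by positivity)
    _ ≤ 1 / (2 * √π * r ^ ((3:ℝ)/2)) * (32 * r ^ ((3:ℝ)/2)) := by gcongr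
    _ = 16 / √π := by field_simp; ring

lemma integrableOn_heatP_one : IntegrableOn (fun r => heatP r 1) (Ioi 0) := by
  have hmeas {μ : Measure ℝ} : AEStronglyMeasurable (fun r => heatP r 1) μ :=
    (measurable_heatP_left 1).aestronglyMeasurable
  rw [← Ioc_union_Ioi_eq_Ioi zero_le_one]
  refine IntegrableOn.union ?_ ?_
  · refine Measure.integrableOn_of_bounded (M := 16 / √π) measure_Ioc_lt_top.ne hmeas ?_
    filter_upwards [ae_restrict_mem measurableSet_Ioc] with r hr
    rw [norm_of_nonneg (heatP_nonneg hr.1.le zero_le_one)]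
    exact heatP_one_le_of_le_one hr.1 hr.2
  · refine ((integrableOn_Ioi_rpow_of_lt (a := -(3:ℝ)/2) (by norm_num) one_pos).const_mul
      (2 * √π)⁻¹).mono' hmeas ?_
    filter_upwards [ae_restrict_mem measurableSet_Ioi] with r hr
    have hr0 : 0 < r := one_pos.trans hr
    rw [norm_of_nonneg (heatP_nonneg hr0.le zero_le_one)]
    exact heatP_one_le_rpow hr0

section ZeroExtension

variable {f : ℝ → ℝ} {T M β : ℝ}

lemma abs_le_of_holderOn_Icc (hM : 0 ≤ M) (hβ : 0 ≤ β) (hf0 : f 0 = 0)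
    (hf : ∀ s ∈ Icc 0 T, ∀ t ∈ Icc 0 T, |f s - f t| ≤ M * |s - t| ^ β)
    {s b : ℝ} (hs : s ∈ Icc 0 T) (hb : b ≤ 0) : |f s| ≤ M * |s - b| ^ β := by
  have h := hf s hs 0 ⟨le_rfl, hs.1.trans hs.2⟩
  rw [hf0, sub_zero, sub_zero] at h
  refine h.trans (mul_le_mul_of_nonneg_left ?_ hM)
  refine rpow_le_rpow (abs_nonneg _) ?_ hβ
  rw [abs_of_nonneg hs.1, abs_of_nonneg (by linarith [hs.1])]
  linarith

lemma abs_indicator_Ici_sub_le (hM : 0 ≤ M) (hβ : 0 ≤ β) (hf0 : f 0 = 0)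
    (hf : ∀ s ∈ Icc 0 T, ∀ t ∈ Icc 0 T, |f s - f t| ≤ M * |s - t| ^ β)
    {a b : ℝ} (ha : a ≤ T) (hb : b ≤ T) :
    |(Ici 0).indicator f a - (Ici 0).indicator f b| ≤ M * |a - b| ^ β := by
  rcases le_or_gt 0 a with ha0 | ha0 <;> rcases le_or_gt 0 b with hb0 | hb0
  · simpa [indicator_of_mem, ha0, hb0] using hf a ⟨ha0, ha⟩ b ⟨hb0, hb⟩
  · simpa [indicator_of_mem, indicator_of_notMem, ha0, hb0.not_ge] using
      abs_le_of_holderOn_Icc hM hβ hf0 hf ⟨ha0, ha⟩ hb0.le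
  · simpa [indicator_of_mem, indicator_of_notMem, hb0, ha0.not_ge, abs_sub_comm a b] using
      abs_le_of_holderOn_Icc hM hβ hf0 hf ⟨hb0, hb⟩ ha0.le
  · simp only [mem_Ici, ha0.not_ge, hb0.not_ge, not_false_eq_true, indicator_of_notMem, sub_self,
      abs_zero]
    positivity

lemma abs_indicator_Ici_le (hM : 0 ≤ M) (hβ : 0 ≤ β) (hf0 : f 0 = 0)
    (hf : ∀ s ∈ Icc 0 T, ∀ t ∈ Icc 0 T, |f s - f t| ≤ M * |s - t| ^ β)
    (hT : 0 ≤ T) {s : ℝ} (hs : s ≤ T) : |(Ici 0).indicator f s| ≤ M * T ^ β := by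
  rcases le_or_gt 0 s with hs0 | hs0
  · rw [indicator_of_mem (mem_Ici.2 hs0)]
    have hsT : |s - 0| ^ β ≤ T ^ β := rpow_le_rpow (abs_nonneg _) (by simpa [abs_of_nonneg hs0]) hβ
    exact (abs_le_of_holderOn_Icc hM hβ hf0 hf ⟨hs0, hs⟩ le_rfl).trans
      (mul_le_mul_of_nonneg_left hsT hM)
  · rw [indicator_of_notMem (notMem_Ici.2 hs0), abs_zero]
    positivity

end ZeroExtension

lemma abs_integral_mul_sub_integral_mul_le {X : Type*} [MeasurableSpace X] {μ : Measure X}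
    {K F G : X → ℝ} {ε : ℝ} (hK : Integrable K μ) (hK0 : ∀ᵐ x ∂μ, 0 ≤ K x)
    (hF : Integrable (fun x => K x * F x) μ) (hG : Integrable (fun x => K x * G x) μ)
    (hFG : ∀ᵐ x ∂μ, |F x - G x| ≤ ε) :
    |∫ x, K x * F x ∂μ - ∫ x, K x * G x ∂μ| ≤ (∫ x, K x ∂μ) * ε := by
  rw [← integral_sub hF hG, ← integral_mul_const ε K, ← norm_eq_abs]
  refine norm_integral_le_of_norm_le (hK.mul_const ε) ?_
  filter_upwards [hK0, hFG] with x hKx hFGx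
  rw [← mul_sub, norm_mul, norm_of_nonneg hKx]
  exact mul_le_mul_of_nonneg_left hFGx hKx

lemma abs_integral_heatP_mul_sub_le {g : ℝ → ℝ} {T B M β : ℝ} (hg : Measurable g)
    (hbdd : ∀ s ≤ T, |g s| ≤ B) (hholder : ∀ a ≤ T, ∀ b ≤ T, |g a - g b| ≤ M * |a - b| ^ β)
    (y : ℝ) {t₁ t₂ : ℝ} (ht₁ : t₁ ≤ T) (ht₂ : t₂ ≤ T) :
    |(∫ r in Ioi 0, heatP r 1 * g (t₁ - y ^ 2 * r)) -
        ∫ r in Ioi 0, heatP r 1 * g (t₂ - y ^ 2 * r)| ≤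
      (∫ r in Ioi 0, heatP r 1) * (M * |t₁ - t₂| ^ β) := by
  have hshift {t r : ℝ} (ht : t ≤ T) (hr : r ∈ Ioi 0) : t - y ^ 2 * r ≤ T :=
    (sub_le_self _ (by positivity [mem_Ioi.1 hr])).trans ht
  have hint {t : ℝ} (ht : t ≤ T) :
      IntegrableOn (fun r => heatP r 1 * g (t - y ^ 2 * r)) (Ioi 0) := by
    refine integrableOn_heatP_one.mul_bdd (c := B) (hg.comp (by fun_prop)).aestronglyMeasurable
      ?_
    filter_upwards [ae_restrict_mem measurableSet_Ioi] with r hr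
    exact hbdd _ (hshift ht hr)
  refine abs_integral_mul_sub_integral_mul_le integrableOn_heatP_one ?_ (hint ht₁) (hint ht₂) ?_
    <;> filter_upwards [ae_restrict_mem measurableSet_Ioi] with r hr
  · exact heatP_nonneg (le_of_lt hr) zero_le_one
  · simpa only [sub_sub_sub_cancel_right] using hholder _ (hshift ht₁ hr) _ (hshift ht₂ hr)

lemma dtv_eq_integral_indicator (h' : ℝ → ℝ) (t y : ℝ) :
    dtv h' t y = ∫ r in Ioi 0, heatP r 1 * (Ici 0).indicator h' (t - y ^ 2 * r) := by
  simp only [dtv, indicator_apply, mem_Ici]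

theorem time_holder_estimate_general (α T : ℝ) (hα : α ∈ Set.Ioo (0:ℝ) 1) :
    ∃ C : ℝ, 0 < C ∧
      ∀ (h h' : ℝ → ℝ), (∀ t, HasDerivAt h (h' t) t) →
        ∀ M : ℝ, 0 ≤ M →
        (∀ s ∈ Set.Icc (0:ℝ) T, ∀ t ∈ Set.Icc (0:ℝ) T,
          |h' s - h' t| ≤ M * |s - t| ^ (α/2)) →
        h 0 = 0 → h' 0 = 0 →
        ∀ y : ℝ, 0 ≤ y → ∀ t₁ ∈ Set.Icc (0:ℝ) T, ∀ t₂ ∈ Set.Icc (0:ℝ) T,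
          |dtv h' t₁ y - dtv h' t₂ y| ≤ C * M * |t₁ - t₂| ^ (α/2) := by
  set I := ∫ r in Ioi 0, heatP r 1
  have hI : 0 ≤ I :=
    setIntegral_nonneg measurableSet_Ioi fun r hr => heatP_nonneg (le_of_lt hr) zero_le_one
  refine ⟨I + 1, by linarith, fun h h' hderiv M hM hh' _ hh'0 y _ t₁ ht₁ t₂ ht₂ => ?_⟩
  have hβ : 0 ≤ α / 2 := by linarith [hα.1]
  have hmeas : Measurable ((Ici 0).indicator h') := by
    have hderiv_eq : deriv h = h' := funext fun t => (hderiv t).deriv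
    exact (hderiv_eq ▸ measurable_deriv h).indicator measurableSet_Ici
  rw [dtv_eq_integral_indicator, dtv_eq_integral_indicator]
  calc _ ≤ I * (M * |t₁ - t₂| ^ (α / 2)) :=
        abs_integral_heatP_mul_sub_le hmeas
          (fun s => abs_indicator_Ici_le hM hβ hh'0 hh' (ht₁.1.trans ht₁.2))
          (fun a ha b hb => abs_indicator_Ici_sub_le hM hβ hh'0 hh' ha hb) y ht₁.2 ht₂.2
    _ ≤ (I + 1) * M * |t₁ - t₂| ^ (α / 2) := by
        rw [mul_assoc]
        exact mul_le_mul_of_nonneg_right (by linarith) (by positivity)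

theorem time_holder_estimate (α T : ℝ) (hα : α ∈ Set.Ioo (0:ℝ) 1) (hT : 0 < T) :
    ∃ C : ℝ, 0 < C ∧
      ∀ (h h' : ℝ → ℝ), (∀ t, HasDerivAt h (h' t) t) →
        ∀ M : ℝ, 0 ≤ M →
        (∀ s ∈ Set.Icc (0:ℝ) T, ∀ t ∈ Set.Icc (0:ℝ) T,
          |h' s - h' t| ≤ M * |s - t| ^ (α/2)) →
        h 0 = 0 → h' 0 = 0 →
        ∀ y : ℝ, 0 ≤ y → ∀ t₁ ∈ Set.Icc (0:ℝ) T, ∀ t₂ ∈ Set.Icc (0:ℝ) T,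
          |dtv h' t₁ y - dtv h' t₂ y| ≤ C * M * |t₁ - t₂| ^ (α/2) :=
  time_holder_estimate_general α T hα
end

section
/- Let α ∈ (0,1), T > 0, and let h : [0,T] → ℝ be C¹ with h(0) = h'(0) = 0 and [h']_{α/2;[0,T]} < ∞. Let v(t,y) = ∫₀^t P(s,y) h(t-s) ds. Then there exists C = C(α) such that for all t ∈ [0,T] and all y₁, y₂ ≥ 0 with y₁ + y₂ ≤ 2|y₁ - y₂|, |∂_t v(t, y₁) - ∂_t v(t, y₂)| ≤ C [h']_{α/2;[0,T]} |y₁ - y₂|^{α}. -/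
open MeasureTheory Real

lemma heatP_nonneg_s7 {r : ℝ} (hr : 0 < r) : 0 ≤ heatP r 1 := by
  unfold heatP; positivity

lemma heatP_meas : Measurable fun r : ℝ => heatP r 1 := by
  unfold heatP; fun_prop

lemma exp_quad (x : ℝ) (hx : 0 ≤ x) : x^2/4 ≤ Real.exp x := by
  have h1 := Real.add_one_le_exp (x/2)
  have h2 : Real.exp (x/2) * Real.exp (x/2) = Real.exp x := by
    rw [← Real.exp_add]; ring_nf
  nlinarith [Real.exp_pos (x/2)]

lemma heatP_rpow_int (β : ℝ) (hβ0 : 0 ≤ β) (hβ : β < 1/2) :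
    IntegrableOn (fun r => heatP r 1 * r ^ β) (Set.Ioi (0:ℝ)) := by
  have hπ : 0 < Real.sqrt Real.pi := Real.sqrt_pos.2 Real.pi_pos
  have hmeas : Measurable fun r : ℝ => heatP r 1 * r ^ β :=
    heatP_meas.mul (measurable_id.pow_const β)
  have h1 : IntegrableOn (fun r => heatP r 1 * r ^ β) (Set.Ioc (0:ℝ) 1) := by
    apply Measure.integrableOn_of_bounded (M := 32 / Real.sqrt Real.pi)
    · exact (measure_Ioc_lt_top).ne
    · exact hmeas.aestronglyMeasurable
    · filter_upwards [ae_restrict_mem measurableSet_Ioc] with r hr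
      obtain ⟨hr0, hr1⟩ := hr
      have hs : (0:ℝ) < r ^ ((3:ℝ)/2) := Real.rpow_pos_of_pos hr0 _
      have hr2s : r ^ 2 ≤ r ^ ((3:ℝ)/2) := by
        have := Real.rpow_le_rpow_of_exponent_ge hr0 hr1 (by norm_num : (3:ℝ)/2 ≤ 2)
        rwa [Real.rpow_two] at this
      have he : Real.exp (-(1:ℝ)^2 / (4*r)) ≤ 64 * r^2 := by
        have hx : (0:ℝ) ≤ 1/(4*r) := by positivity
        have key : 1/(64*r^2) ≤ Real.exp (1/(4*r)) := by
          have h := exp_quad (1/(4*r)) hx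
          have : (1/(4*r))^2/4 = 1/(64*r^2) := by field_simp; ring
          linarith [this ▸ h]
        have hinv : Real.exp (-(1:ℝ)^2 / (4*r)) = (Real.exp (1/(4*r)))⁻¹ := by
          rw [← Real.exp_neg]; congr 1; ring
        rw [hinv, inv_eq_one_div, div_le_iff₀ (Real.exp_pos _)]
        have h64 : (0:ℝ) < 64*r^2 := by positivity
        have hm := mul_le_mul_of_nonneg_left key h64.le
        have heq1 : 64*r^2 * (1/(64*r^2)) = 1 := by field_simp
        nlinarith
      have hrβ : r ^ β ≤ 1 := Real.rpow_le_one hr0.le hr1 hβ0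
      have heq : heatP r 1 * r ^ β
          = Real.exp (-(1:ℝ)^2 / (4*r)) * r ^ β / (2 * Real.sqrt Real.pi * r ^ ((3:ℝ)/2)) := by
        unfold heatP; ring
      have hnn : 0 ≤ heatP r 1 * r ^ β :=
        mul_nonneg (heatP_nonneg_s7 hr0) (Real.rpow_nonneg hr0.le _)
      rw [Real.norm_eq_abs, abs_of_nonneg hnn, heq, div_le_iff₀ (by positivity)]
      have hrβ0 : 0 ≤ r ^ β := Real.rpow_nonneg hr0.le _
      have : 32 / Real.sqrt Real.pi * (2 * Real.sqrt Real.pi * r ^ ((3:ℝ)/2))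
          = 64 * r ^ ((3:ℝ)/2) := by field_simp; ring
      rw [this]
      nlinarith [Real.exp_pos (-(1:ℝ)^2 / (4*r))]
  have h2 : IntegrableOn (fun r => heatP r 1 * r ^ β) (Set.Ioi (1:ℝ)) := by
    apply Integrable.mono' (g := fun r => 1/(2*Real.sqrt Real.pi) * r ^ (β - 3/2))
    · exact (integrableOn_Ioi_rpow_of_lt (by linarith) one_pos).const_mul _
    · exact hmeas.aestronglyMeasurable
    · filter_upwards [ae_restrict_mem measurableSet_Ioi] with r hr
      have hr0 : (0:ℝ) < r := lt_trans one_pos hr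
      have hs : (0:ℝ) < r ^ ((3:ℝ)/2) := Real.rpow_pos_of_pos hr0 _
      have he : Real.exp (-(1:ℝ)^2 / (4*r)) ≤ 1 := by
        apply Real.exp_le_one_iff.2
        have : -(1:ℝ)^2/(4*r) = -(1/(4*r)) := by ring
        rw [this]
        exact neg_nonpos.2 (by positivity)
      have hnn : 0 ≤ heatP r 1 * r ^ β :=
        mul_nonneg (heatP_nonneg_s7 hr0) (Real.rpow_nonneg hr0.le _)
      rw [Real.norm_eq_abs, abs_of_nonneg hnn]
      have heq : heatP r 1 * r ^ β
          = Real.exp (-(1:ℝ)^2 / (4*r)) * r ^ β / (2 * Real.sqrt Real.pi * r ^ ((3:ℝ)/2)) := by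
        unfold heatP; ring
      have hrhs : 1/(2*Real.sqrt Real.pi) * r ^ (β - 3/2)
          = 1 * r ^ β / (2 * Real.sqrt Real.pi * r ^ ((3:ℝ)/2)) := by
        rw [Real.rpow_sub hr0]; ring
      rw [heq, hrhs]
      have h2s : (0:ℝ) < 2 * Real.sqrt Real.pi * r ^ ((3:ℝ)/2) := by positivity
      rw [div_le_div_iff_of_pos_right h2s]
      exact mul_le_mul_of_nonneg_right he (Real.rpow_nonneg hr0.le _)
  have := h1.union h2
  rwa [Set.Ioc_union_Ioi_eq_Ioi (by norm_num : (0:ℝ) ≤ 1)] at this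

theorem space_holder_estimate_case1 (α : ℝ) (hα : α ∈ Set.Ioo (0:ℝ) 1) :
    ∃ C : ℝ, 0 < C ∧
      ∀ (T : ℝ), 0 < T →
      ∀ (h h' : ℝ → ℝ), (∀ t, HasDerivAt h (h' t) t) →
        ∀ M : ℝ, 0 ≤ M →
        (∀ s ∈ Set.Icc (0:ℝ) T, ∀ t ∈ Set.Icc (0:ℝ) T,
          |h' s - h' t| ≤ M * |s - t| ^ (α/2)) →
        h 0 = 0 → h' 0 = 0 →
        ∀ t ∈ Set.Icc (0:ℝ) T, ∀ y₁ y₂ : ℝ, 0 ≤ y₁ → 0 ≤ y₂ →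
          y₁ + y₂ ≤ 2 * |y₁ - y₂| →
          |dtv h' t y₁ - dtv h' t y₂| ≤ C * M * |y₁ - y₂| ^ α := by
  obtain ⟨hα0, hα1⟩ := hα
  have hα2 : 0 ≤ α/2 := by linarith
  set K := ∫ r in Set.Ioi (0:ℝ), heatP r 1 * r ^ (α/2) with hKdef
  have hKint : IntegrableOn (fun r => heatP r 1 * r ^ (α/2)) (Set.Ioi 0) :=
    heatP_rpow_int (α/2) (by linarith) (by linarith)
  have hK0 : 0 ≤ K :=
    setIntegral_nonneg measurableSet_Ioi fun r hr =>
      mul_nonneg (heatP_nonneg_s7 hr) (Real.rpow_nonneg (le_of_lt hr) _)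
  have hPow2 : (0:ℝ) < 2 ^ (α/2) := Real.rpow_pos_of_pos two_pos _
  refine ⟨2 ^ (α/2) * K + 1, by positivity, ?_⟩
  intro T hT h h' hderiv M hM hHol h0 h'0 t ht y₁ y₂ hy₁ hy₂ hclose
  obtain ⟨ht0, htT⟩ := ht
  -- measurability of h'
  have hh'me : Measurable h' := by
    have : h' = deriv h := funext fun x => ((hderiv x).deriv).symm
    rw [this]; exact measurable_deriv h
  set E : ℝ → ℝ := fun x => if 0 ≤ x then h' x else 0 with hE
  have hEme : Measurable E := Measurable.ite measurableSet_Ici hh'me measurable_const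
  -- global bound on E on (-∞, T]
  have hEbound : ∀ x, x ≤ T → |E x| ≤ M * T ^ (α/2) := by
    intro x hxT
    by_cases hx : 0 ≤ x
    · simp only [hE, if_pos hx]
      have := hHol x ⟨hx, hxT⟩ 0 ⟨le_refl _, hT.le⟩
      rw [h'0, sub_zero, sub_zero, abs_of_nonneg hx] at this
      calc |h' x| ≤ M * x ^ (α/2) := this
        _ ≤ M * T ^ (α/2) :=
          mul_le_mul_of_nonneg_left (Real.rpow_le_rpow hx hxT hα2) hM
    · simp only [hE, if_neg hx, abs_zero]
      positivity
  -- Hölder continuity of E on (-∞, T]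
  have hEhold : ∀ a b, a ≤ T → b ≤ T → |E a - E b| ≤ M * |a - b| ^ (α/2) := by
    have key : ∀ a b, a ≤ T → b ≤ T → b ≤ a → |E a - E b| ≤ M * |a - b| ^ (α/2) := by
      intro a b haT hbT hba
      by_cases hb : 0 ≤ b
      · have ha : 0 ≤ a := le_trans hb hba
        simp only [hE, if_pos ha, if_pos hb]
        exact hHol a ⟨ha, haT⟩ b ⟨hb, hbT⟩
      · by_cases ha : 0 ≤ a
        · simp only [hE, if_pos ha, if_neg hb, sub_zero]
          have h1 := hHol a ⟨ha, haT⟩ 0 ⟨le_refl _, hT.le⟩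
          rw [h'0, sub_zero, sub_zero, abs_of_nonneg ha] at h1
          have hab : a ≤ |a - b| := by
            rw [abs_of_nonneg (by linarith)]; linarith [lt_of_not_ge hb]
          calc |h' a| ≤ M * a ^ (α/2) := h1
            _ ≤ M * |a - b| ^ (α/2) :=
              mul_le_mul_of_nonneg_left (Real.rpow_le_rpow ha hab hα2) hM
        · simp only [hE, if_neg ha, if_neg hb, sub_zero, abs_zero]
          positivity
    intro a b haT hbT
    rcases le_total b a with hba | hab
    · exact key a b haT hbT hba
    · rw [abs_sub_comm, abs_sub_comm a b]; exact key b a hbT haT hab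
  -- the integrands
  set f : ℝ → ℝ → ℝ := fun y r => heatP r 1 * E (t - y^2 * r) with hf
  have hfme : ∀ y : ℝ, Measurable (f y) := by
    intro y
    exact heatP_meas.mul (hEme.comp (measurable_const.sub (measurable_id.const_mul _)))
  have hargT : ∀ (y r : ℝ), 0 < r → t - y^2 * r ≤ T := by
    intro y r hr
    nlinarith [sq_nonneg y]
  have hfint : ∀ y : ℝ, IntegrableOn (f y) (Set.Ioi 0) := by
    intro y
    apply Integrable.mono' (g := fun r => heatP r 1 * (M * T ^ (α/2)))
    · have h0' : IntegrableOn (fun r => heatP r 1 * r ^ (0:ℝ)) (Set.Ioi (0:ℝ)) :=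
        heatP_rpow_int 0 le_rfl (by norm_num)
      simp only [Real.rpow_zero, mul_one] at h0'
      exact h0'.mul_const _
    · exact (hfme y).aestronglyMeasurable
    · filter_upwards [ae_restrict_mem measurableSet_Ioi] with r hr
      rw [hf]
      simp only [Real.norm_eq_abs, abs_mul, abs_of_nonneg (heatP_nonneg_s7 hr)]
      exact mul_le_mul_of_nonneg_left (hEbound _ (hargT y r hr)) (heatP_nonneg_s7 hr)
  -- rewrite dtv as integral of f
  have hdtv : ∀ y : ℝ, dtv h' t y = ∫ r in Set.Ioi (0:ℝ), f y r := by
    intro y; rfl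
  set d := |y₁ - y₂| with hd
  have hd0 : 0 ≤ d := abs_nonneg _
  have hdiffsq : |y₁^2 - y₂^2| ≤ 2 * d^2 := by
    have : y₁^2 - y₂^2 = (y₁ + y₂) * (y₁ - y₂) := by ring
    rw [this, abs_mul, abs_of_nonneg (by linarith : 0 ≤ y₁ + y₂)]
    nlinarith [abs_nonneg (y₁ - y₂)]
  have hdα : (d^2) ^ (α/2) = d ^ α := by
    rw [← Real.rpow_natCast d 2, ← Real.rpow_mul hd0]
    norm_num
    congr 1
    ring
  -- pointwise bound
  have hbound : ∀ r ∈ Set.Ioi (0:ℝ),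
      |f y₁ r - f y₂ r| ≤ heatP r 1 * r ^ (α/2) * (2 ^ (α/2) * M * d ^ α) := by
    intro r hr
    have hr0 : (0:ℝ) < r := hr
    have hdiff : f y₁ r - f y₂ r = heatP r 1 * (E (t - y₁^2 * r) - E (t - y₂^2 * r)) := by
      rw [hf]; ring
    rw [hdiff, abs_mul, abs_of_nonneg (heatP_nonneg_s7 hr0)]
    have harg : |(t - y₁^2 * r) - (t - y₂^2 * r)| = |y₁^2 - y₂^2| * r := by
      rw [show (t - y₁^2 * r) - (t - y₂^2 * r) = (y₂^2 - y₁^2) * r by ring,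
        abs_mul, abs_of_nonneg hr0.le, abs_sub_comm]
    have hE1 := hEhold (t - y₁^2 * r) (t - y₂^2 * r) (hargT y₁ r hr0) (hargT y₂ r hr0)
    rw [harg] at hE1
    have hstep : |y₁^2 - y₂^2| * r ≤ 2 * d^2 * r :=
      mul_le_mul_of_nonneg_right hdiffsq hr0.le
    have h2 : (|y₁^2 - y₂^2| * r) ^ (α/2) ≤ (2 * d^2 * r) ^ (α/2) :=
      Real.rpow_le_rpow (by positivity) hstep hα2
    have h3 : (2 * d^2 * r) ^ (α/2) = 2 ^ (α/2) * d ^ α * r ^ (α/2) := by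
      rw [Real.mul_rpow (by positivity) hr0.le, Real.mul_rpow (by norm_num) (by positivity),
        hdα]
    calc heatP r 1 * |E (t - y₁^2 * r) - E (t - y₂^2 * r)|
        ≤ heatP r 1 * (M * (|y₁^2 - y₂^2| * r) ^ (α/2)) :=
          mul_le_mul_of_nonneg_left hE1 (heatP_nonneg_s7 hr0)
      _ ≤ heatP r 1 * (M * (2 ^ (α/2) * d ^ α * r ^ (α/2))) := by
          rw [← h3]
          exact mul_le_mul_of_nonneg_left
            (mul_le_mul_of_nonneg_left h2 hM) (heatP_nonneg_s7 hr0)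
      _ = heatP r 1 * r ^ (α/2) * (2 ^ (α/2) * M * d ^ α) := by ring
  -- main estimate
  have hintdiff : IntegrableOn (fun r => f y₁ r - f y₂ r) (Set.Ioi (0:ℝ)) :=
    (hfint y₁).sub (hfint y₂)
  calc |dtv h' t y₁ - dtv h' t y₂|
      = |∫ r in Set.Ioi (0:ℝ), (f y₁ r - f y₂ r)| := by
        rw [hdtv, hdtv, integral_sub (hfint y₁) (hfint y₂)]
    _ ≤ ∫ r in Set.Ioi (0:ℝ), |f y₁ r - f y₂ r| := by
        simpa [Real.norm_eq_abs] using
          norm_integral_le_integral_norm (μ := volume.restrict (Set.Ioi (0:ℝ)))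
            (fun r => f y₁ r - f y₂ r)
    _ ≤ ∫ r in Set.Ioi (0:ℝ), heatP r 1 * r ^ (α/2) * (2 ^ (α/2) * M * d ^ α) := by
        apply setIntegral_mono_on hintdiff.abs (hKint.mul_const _) measurableSet_Ioi
        exact hbound
    _ = K * (2 ^ (α/2) * M * d ^ α) := by
        rw [integral_mul_const]
    _ ≤ (2 ^ (α/2) * K + 1) * M * d ^ α := by
        have hdα0 : 0 ≤ d ^ α := Real.rpow_nonneg hd0 _
        nlinarith [mul_nonneg hM hdα0]
end
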